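/- arXiv:0705.1833 — 5 statements merged into one kernel-verified Lean document; each statement's English description precedes it below -/
import Mathlib

section
/- The transformation φ1 is birational with explicit inverse ψ: for all complex (q1,p1,q2,p2) with q1 ≠ q2, one has ψ(φ1(q1,p1,q2,p2)) = (q1,p1,q2,p2); and for all complex (Q1,P1,Q2,P2) with Q1 ≠ 0, the image ψ(Q1,P1,Q2,P2) has first coordinate different from its third coordinate and φ1(ψ(Q1,P1,Q2,P2)) = (Q1,P1,Q2,P2). -/
/-- The birational symplectic transformation φ1 of the Garnier system in two
variables, depending on a constant `c`. -/
noncomputable def phi1 (c : ℂ) : ℂ × ℂ × ℂ × ℂ → ℂ × ℂ × ℂ × ℂ :=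
  fun (q1, p1, q2, p2) =>
    (1 / (q1 - q2), -((q1 - q2) * p1 - c) * (q1 - q2), q2, p1 + p2)

/-- The explicit inverse ψ of φ1. -/
noncomputable def psi (c : ℂ) : ℂ × ℂ × ℂ × ℂ → ℂ × ℂ × ℂ × ℂ :=
  fun (Q1, P1, Q2, P2) =>
    (Q2 + 1 / Q1, Q1 * (c - P1 * Q1), Q2, P2 - Q1 * (c - P1 * Q1))

/-- φ1 is birational with explicit inverse ψ: for `q1 ≠ q2` one has
`ψ(φ1(q1,p1,q2,p2)) = (q1,p1,q2,p2)`, and for `Q1 ≠ 0` the image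
`ψ(Q1,P1,Q2,P2)` has first coordinate different from its third one and
`φ1(ψ(Q1,P1,Q2,P2)) = (Q1,P1,Q2,P2)`. -/
theorem phi1_birational (κ0 κ1 κinf θ1 θ2 : ℂ) :
    (∀ q1 p1 q2 p2 : ℂ, q1 ≠ q2 →
      psi ((κ0 + κ1 - κinf + θ1 + θ2 - 1) / 2)
          (phi1 ((κ0 + κ1 - κinf + θ1 + θ2 - 1) / 2) (q1, p1, q2, p2)) =
        (q1, p1, q2, p2)) ∧
    (∀ Q1 P1 Q2 P2 : ℂ, Q1 ≠ 0 →
      (psi ((κ0 + κ1 - κinf + θ1 + θ2 - 1) / 2) (Q1, P1, Q2, P2)).1 ≠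
          (psi ((κ0 + κ1 - κinf + θ1 + θ2 - 1) / 2) (Q1, P1, Q2, P2)).2.2.1 ∧
        phi1 ((κ0 + κ1 - κinf + θ1 + θ2 - 1) / 2)
            (psi ((κ0 + κ1 - κinf + θ1 + θ2 - 1) / 2) (Q1, P1, Q2, P2)) =
          (Q1, P1, Q2, P2)) := by
  set c := (κ0 + κ1 - κinf + θ1 + θ2 - 1) / 2 with hc
  constructor
  · intro q1 p1 q2 p2 h
    have hd : q1 - q2 ≠ 0 := sub_ne_zero.mpr h
    simp only [phi1, psi, Prod.mk.injEq]
    refine ⟨?_, ?_, trivial, ?_⟩ <;> field_simp <;> ring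
  · intro Q1 P1 Q2 P2 h
    simp only [phi1, psi, Prod.mk.injEq]
    have h1 : Q2 + 1 / Q1 - Q2 = 1 / Q1 := by ring
    constructor
    · intro he
      have : (1 : ℂ) / Q1 = 0 := by
        have := sub_eq_zero.mpr he
        rwa [h1] at this
      simp [h] at this
    · rw [h1]
      refine ⟨by field_simp, ?_, trivial, by ring⟩
      field_simp
      ring
end

section
/- The transformation φ1 is symplectic: at every point (q1,p1,q2,p2) ∈ ℂ⁴ with q1 ≠ q2, the Jacobian matrix J of the map φ1 (the 4×4 matrix of partial derivatives of (Q1,P1,Q2,P2) with respect to (q1,p1,q2,p2)) satisfies Jᵀ · Ω · J = Ω, where Ω is the standard symplectic matrix with block-diagonal 2×2 blocks [[0,1],[−1,0]] (in the coordinate ordering (q1,p1,q2,p2)). Equivalently, dP1∧dQ1 + dP2∧dQ2 = dp1∧dq1 + dp2∧dq2. -/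
open Matrix

/-- The Jacobian matrix of a map `F : ℂ⁴ → ℂ⁴` at a point `x`: the 4×4 matrix of
partial derivatives, `J i j = ∂F_i/∂x_j`. -/
noncomputable def jacobian (F : (Fin 4 → ℂ) → (Fin 4 → ℂ)) (x : Fin 4 → ℂ) :
    Matrix (Fin 4) (Fin 4) ℂ :=
  Matrix.of fun i j => fderiv ℂ (fun y => F y i) x (Pi.single j 1)

/-- The standard symplectic matrix with block-diagonal 2×2 blocks `[[0,1],[-1,0]]`
in the coordinate ordering `(q1, p1, q2, p2)`. -/
def standardSymplectic : Matrix (Fin 4) (Fin 4) ℂ :=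
  !![0, 1, 0, 0; -1, 0, 0, 0; 0, 0, 0, 1; 0, 0, -1, 0]

/-- The transformation φ1 of the Garnier system in two variables, with
`c = (κ0 + κ1 - κ∞ + θ1 + θ2 - 1)/2`, regarded as a map on
`(q1, p1, q2, p2) ∈ ℂ⁴`. -/
noncomputable def phi1map (c : ℂ) (x : Fin 4 → ℂ) : Fin 4 → ℂ :=
  ![1 / (x 0 - x 2), -((x 0 - x 2) * x 1 - c) * (x 0 - x 2), x 2, x 1 + x 3]

noncomputable def pr (i : Fin 4) : (Fin 4 → ℂ) →L[ℂ] ℂ := ContinuousLinearMap.proj i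

noncomputable def f0 : (Fin 4 → ℂ) →L[ℂ] ℂ := pr 0 - pr 2

lemma jac_eq (c : ℂ) (x : Fin 4 → ℂ) (h : x 0 ≠ x 2) :
    jacobian (phi1map c) x =
    !![-((x 0 - x 2)^2)⁻¹, 0, ((x 0 - x 2)^2)⁻¹, 0;
       -2*(x 0 - x 2)*x 1 + c, -(x 0 - x 2)^2, 2*(x 0 - x 2)*x 1 - c, 0;
       0, 0, 1, 0;
       0, 1, 0, 1] := by
  have hd : x 0 - x 2 ≠ 0 := sub_ne_zero.mpr h
  have hf0 : HasFDerivAt (fun y : Fin 4 → ℂ => y 0 - y 2) f0 x := f0.hasFDerivAt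
  have hp1 : HasFDerivAt (fun y : Fin 4 → ℂ => y 1) (pr 1) x := (pr 1).hasFDerivAt
  have h0 : HasFDerivAt (fun y : Fin 4 → ℂ => phi1map c y 0)
      (-(((x 0 - x 2) ^ 2)⁻¹ • f0)) x := by
    have := (hasDerivAt_inv hd).comp_hasFDerivAt x hf0
    have hfun : (fun y : Fin 4 → ℂ => phi1map c y 0)
        = fun y : Fin 4 → ℂ => (y 0 - y 2)⁻¹ := by
      funext y; simp [phi1map, one_div]
    rw [hfun]
    exact this.congr_fderiv (by ext v; simp)
  have h1 : HasFDerivAt (fun y : Fin 4 → ℂ => phi1map c y 1)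
      (-(((x 0 - x 2) * x 1 - c) • f0 +
        (x 0 - x 2) • ((x 0 - x 2) • pr 1 + x 1 • f0))) x := by
    have := (((hf0.mul hp1).sub_const c).mul hf0).neg
    have hfun : (fun y : Fin 4 → ℂ => phi1map c y 1)
        = fun y : Fin 4 → ℂ => -(((y 0 - y 2) * y 1 - c) * (y 0 - y 2)) := by
      funext y; simp [phi1map]; ring
    rw [hfun]; exact this
  have h2 : HasFDerivAt (fun y : Fin 4 → ℂ => phi1map c y 2) (pr 2) x := by
    have : HasFDerivAt (fun y : Fin 4 → ℂ => y 2) (pr 2) x := (pr 2).hasFDerivAt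
    simpa [phi1map] using this
  have h3 : HasFDerivAt (fun y : Fin 4 → ℂ => phi1map c y 3) (pr 1 + pr 3) x := by
    have := ((pr 1).hasFDerivAt (x := x)).add ((pr 3).hasFDerivAt (x := x))
    have hfun : (fun y : Fin 4 → ℂ => phi1map c y 3) = ⇑(pr 1) + ⇑(pr 3) := by
      funext y; simp [phi1map, pr]
    rw [hfun]; exact this
  ext i j
  fin_cases i <;> fin_cases j <;>
    simp [jacobian, h0.fderiv, h1.fderiv, h2.fderiv, h3.fderiv, f0, pr,
      Pi.single_apply, Matrix.vecHead, Matrix.vecTail] <;> ring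


@[simp] lemma vh_const (n : ℕ) (a : ℂ) :
    Matrix.vecHead (Matrix.vecTail fun _ : Fin (n + 2) => a) = a := rfl

lemma aux_prod (d p c : ℂ) (hd : d ≠ 0) :
    (!![-(d^2)⁻¹, 0, (d^2)⁻¹, 0;
       -2*d*p + c, -d^2, 2*d*p - c, 0;
       0, 0, 1, 0;
       0, 1, 0, 1] : Matrix (Fin 4) (Fin 4) ℂ)ᵀ * standardSymplectic *
      !![-(d^2)⁻¹, 0, (d^2)⁻¹, 0;
       -2*d*p + c, -d^2, 2*d*p - c, 0;
       0, 0, 1, 0;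
       0, 1, 0, 1] = standardSymplectic := by
  have htr : (!![-(d^2)⁻¹, 0, (d^2)⁻¹, 0;
       -2*d*p + c, -d^2, 2*d*p - c, 0;
       0, 0, 1, 0;
       0, 1, 0, 1] : Matrix (Fin 4) (Fin 4) ℂ)ᵀ =
      !![-(d^2)⁻¹, -2*d*p + c, 0, 0;
         0, -d^2, 0, 1;
         (d^2)⁻¹, 2*d*p - c, 1, 0;
         0, 0, 0, 1] := by
    ext i j
    fin_cases i <;> fin_cases j <;> rfl
  rw [htr]
  ext i j
  fin_cases i <;> fin_cases j <;>
    · simp [Matrix.mul_apply, Fin.sum_univ_four, standardSymplectic, vh_const]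
      try simp [Matrix.vecHead, Matrix.vecTail]
      try field_simp
      try ring

/-- φ1 is symplectic: at every point with `q1 ≠ q2`, its Jacobian matrix `J`
satisfies `Jᵀ * Ω * J = Ω`, i.e. `dP1∧dQ1 + dP2∧dQ2 = dp1∧dq1 + dp2∧dq2`. -/
theorem phi1_symplectic (κ0 κ1 κinf θ1 θ2 : ℂ) (x : Fin 4 → ℂ) (h : x 0 ≠ x 2) :
    (jacobian (phi1map ((κ0 + κ1 - κinf + θ1 + θ2 - 1) / 2)) x)ᵀ *
        standardSymplectic *
        jacobian (phi1map ((κ0 + κ1 - κinf + θ1 + θ2 - 1) / 2)) x =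
      standardSymplectic := by
  have hd : x 0 - x 2 ≠ 0 := sub_ne_zero.mpr h
  rw [jac_eq _ x h]
  exact aux_prod _ _ _ hd
end

section
/- The Hamiltonian H1 satisfies H1(1−q1, −p1, 1−q2, −p2, 1−t, 1−s; κ1, κ0, θ1, θ2) = −H1(q1, p1, q2, p2, t, s; κ0, κ1, θ1, θ2) for all complex q1,p1,q2,p2,t,s such that q1 ≠ q2, t ∉ {0,1}, t ≠ s, and q1, q2 ∉ {0, 1, t, s}. (Note that the parameters κ0 and κ1 are exchanged on the left-hand side; the auxiliary parameter κ is unchanged since it is symmetric in κ0 and κ1.) This expresses the invariance of the Garnier system under the Bäcklund transformation σ1. -/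
/-- The quadratic form `B(q,p)` appearing in the Garnier Hamiltonian, with
`κ = ((κ0+κ1+θ1+θ2-1)² - κ∞²)/4`. -/
noncomputable def garnierB (κ0 κ1 κinf θ1 θ2 t s q p : ℂ) : ℂ :=
  p ^ 2 + (((κ0 + κ1 + θ1 + θ2 - 1) ^ 2 - κinf ^ 2) / 4) / (q * (q - 1)) -
    ((θ1 - 1) / (q - t) + θ2 / (q - s) + κ0 / q + κ1 / (q - 1)) * p

/-- The Hamiltonian `H1` of the Garnier system in two variables. -/
noncomputable def garnierH1 (κ0 κ1 κinf θ1 θ2 q1 p1 q2 p2 t s : ℂ) : ℂ :=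
  -(q1 * (q1 - 1) * (q1 - t) * (q1 - s) * (q2 - t)) /
      ((q1 - q2) * t * (t - 1) * (t - s)) *
      garnierB κ0 κ1 κinf θ1 θ2 t s q1 p1 -
    (q2 * (q2 - 1) * (q2 - t) * (q2 - s) * (q1 - t)) /
      ((q2 - q1) * t * (t - 1) * (t - s)) *
      garnierB κ0 κ1 κinf θ1 θ2 t s q2 p2

lemma garnierB_sigma1 (κ0 κ1 κinf θ1 θ2 t s q p : ℂ) :
    garnierB κ1 κ0 κinf θ1 θ2 (1 - t) (1 - s) (1 - q) (-p) =
      garnierB κ0 κ1 κinf θ1 θ2 t s q p := by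
  unfold garnierB
  rw [show (1 - q) * (1 - q - 1) = q * (q - 1) by ring,
      show (1 : ℂ) - q - (1 - t) = -(q - t) by ring,
      show (1 : ℂ) - q - (1 - s) = -(q - s) by ring,
      show (1 : ℂ) - q - 1 = -q by ring,
      show (1 : ℂ) - q = -(q - 1) by ring]
  simp only [div_neg, neg_neg, neg_mul, mul_neg, neg_add]
  ring

/-- Invariance of the Garnier system under the Bäcklund transformation σ1:
`H1(1-q1, -p1, 1-q2, -p2, 1-t, 1-s; κ1, κ0, θ1, θ2) = -H1(q1, p1, q2, p2, t, s; κ0, κ1, θ1, θ2)`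
(the parameters κ0 and κ1 being exchanged on the left-hand side). -/
theorem garnierH1_sigma1 (κ0 κ1 κinf θ1 θ2 q1 p1 q2 p2 t s : ℂ)
    (hq : q1 ≠ q2) (ht0 : t ≠ 0) (ht1 : t ≠ 1) (hts : t ≠ s)
    (hq10 : q1 ≠ 0) (hq11 : q1 ≠ 1) (hq1t : q1 ≠ t) (hq1s : q1 ≠ s)
    (hq20 : q2 ≠ 0) (hq21 : q2 ≠ 1) (hq2t : q2 ≠ t) (hq2s : q2 ≠ s) :
    garnierH1 κ1 κ0 κinf θ1 θ2 (1 - q1) (-p1) (1 - q2) (-p2) (1 - t) (1 - s) =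
      -garnierH1 κ0 κ1 κinf θ1 θ2 q1 p1 q2 p2 t s := by
  unfold garnierH1
  rw [garnierB_sigma1 κ0 κ1 κinf θ1 θ2 t s q1 p1,
      garnierB_sigma1 κ0 κ1 κinf θ1 θ2 t s q2 p2,
      show (1 - q1) * (1 - q1 - 1) * (1 - q1 - (1 - t)) * (1 - q1 - (1 - s)) *
          (1 - q2 - (1 - t)) = -(q1 * (q1 - 1) * (q1 - t) * (q1 - s) * (q2 - t)) by ring,
      show (1 - q2) * (1 - q2 - 1) * (1 - q2 - (1 - t)) * (1 - q2 - (1 - s)) *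
          (1 - q1 - (1 - t)) = -(q2 * (q2 - 1) * (q2 - t) * (q2 - s) * (q1 - t)) by ring,
      show (1 - q1 - (1 - q2)) * (1 - t) * (1 - t - 1) * (1 - t - (1 - s)) =
          (q1 - q2) * t * (t - 1) * (t - s) by ring,
      show (1 - q2 - (1 - q1)) * (1 - t) * (1 - t - 1) * (1 - t - (1 - s)) =
          (q2 - q1) * t * (t - 1) * (t - s) by ring]
  ring
end

section
/- The conjugation of σ2 by φ1 is given explicitly by: for all complex (Q1,P1,Q2,P2) with Q1 ≠ 0, one has φ1(σ2(ψ(Q1,P1,Q2,P2))) = (−Q1, −(P1 + P2/Q1²), Q2 + 1/Q1, P2), where σ2 swaps the two pairs of canonical variables, σ2(q1,p1,q2,p2) = (q2,p2,q1,p1), and both φ1 and ψ are taken with the same constant c (which is unchanged since σ2 only exchanges θ1 and θ2 among the parameters). -/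
/-- The Bäcklund transformation σ2, which swaps the two pairs of canonical
variables. -/
def sigma2 : ℂ × ℂ × ℂ × ℂ → ℂ × ℂ × ℂ × ℂ :=
  fun (q1, p1, q2, p2) => (q2, p2, q1, p1)

/-- The conjugation of σ2 by φ1: for `Q1 ≠ 0`,
`φ1(σ2(ψ(Q1,P1,Q2,P2))) = (-Q1, -(P1 + P2/Q1²), Q2 + 1/Q1, P2)`,
both φ1 and ψ being taken with the same constant `c = (κ0+κ1-κ∞+θ1+θ2-1)/2`. -/
theorem phi1_sigma2_psi (κ0 κ1 κinf θ1 θ2 : ℂ) (Q1 P1 Q2 P2 : ℂ) (hQ1 : Q1 ≠ 0) :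
    phi1 ((κ0 + κ1 - κinf + θ1 + θ2 - 1) / 2)
        (sigma2 (psi ((κ0 + κ1 - κinf + θ1 + θ2 - 1) / 2) (Q1, P1, Q2, P2))) =
      (-Q1, -(P1 + P2 / Q1 ^ 2), Q2 + 1 / Q1, P2) := by
  simp only [phi1, psi, sigma2]
  refine Prod.ext ?_ (Prod.ext ?_ (Prod.ext ?_ ?_)) <;> field_simp <;> ring
end

section
/- The conjugation of s1 by φ1 is given explicitly by: for all complex (Q1,P1,Q2,P2) with Q1 ≠ 0, Q2 ≠ 0 and Q1·Q2 + 1 ≠ 0, one has φ1' ( s1 ( ψ(Q1,P1,Q2,P2) ) ) = (Q1, P1 − κ0·Q2/(Q1Q2+1), Q2, P2 − κ0·(2Q1Q2+1)/(Q2(Q1Q2+1))), where ψ is taken with the constant c = (κ0+κ1−κ∞+θ1+θ2−1)/2, s1 sends (q1,p1,q2,p2) to (q1, p1 − κ0/q1, q2, p2 − κ0/q2) and negates κ0, and φ1' denotes the map φ1 taken with the transformed constant c' = c − κ0 = (−κ0+κ1−κ∞+θ1+θ2−1)/2. -/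
/-- The Bäcklund transformation s1 of the Garnier system (its action on the
canonical variables, for the parameter κ0):
`(q1,p1,q2,p2) ↦ (q1, p1 - κ0/q1, q2, p2 - κ0/q2)`. -/
noncomputable def bt_s1 (κ0 : ℂ) : ℂ × ℂ × ℂ × ℂ → ℂ × ℂ × ℂ × ℂ :=
  fun (q1, p1, q2, p2) => (q1, p1 - κ0 / q1, q2, p2 - κ0 / q2)

/-- The conjugation of s1 by φ1: for `Q1 ≠ 0`, `Q2 ≠ 0`, `Q1·Q2 + 1 ≠ 0`,
`φ1'(s1(ψ(Q1,P1,Q2,P2))) = (Q1, P1 - κ0·Q2/(Q1Q2+1), Q2, P2 - κ0·(2Q1Q2+1)/(Q2(Q1Q2+1)))`,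
where ψ is taken with `c = (κ0+κ1-κ∞+θ1+θ2-1)/2` and φ1' is φ1 taken with the
transformed constant `c' = c - κ0 = (-κ0+κ1-κ∞+θ1+θ2-1)/2`. -/
theorem phi1_s1_psi (κ0 κ1 κinf θ1 θ2 : ℂ) (Q1 P1 Q2 P2 : ℂ)
    (hQ1 : Q1 ≠ 0) (hQ2 : Q2 ≠ 0) (h : Q1 * Q2 + 1 ≠ 0) :
    phi1 ((-κ0 + κ1 - κinf + θ1 + θ2 - 1) / 2)
        (bt_s1 κ0 (psi ((κ0 + κ1 - κinf + θ1 + θ2 - 1) / 2) (Q1, P1, Q2, P2))) =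
      (Q1, P1 - κ0 * Q2 / (Q1 * Q2 + 1), Q2,
        P2 - κ0 * (2 * Q1 * Q2 + 1) / (Q2 * (Q1 * Q2 + 1))) := by
  have e : Q2 + 1 / Q1 = (Q1 * Q2 + 1) / Q1 := by field_simp
  simp only [phi1, psi, bt_s1, e, Prod.mk.injEq]
  field_simp
  constructor
  · ring
  · ring_nf
    simp
end
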